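/- Let s ∈ (0,1), α ∈ (0,1), c > 0, and set d_ε := ((1+s)/(c α ε))^{1/(1+s−α)}. For d > 1/2 and ε > 0 define f(d) := (2/s)[ 2 d^{−s} − (d − 1/2)^{−s} − (d + 1/2)^{−s} ] + (c ε/(1−α))[ 2 d^{1−α} − (d − 1/2)^{1−α} − (d + 1/2)^{1−α} ]. Then there exists ε̄ = ε̄(s, α, c) > 0 such that for every ε ∈ (0, ε̄) there exists d > d_ε with f(d) = 0. Consequently, for such d, the set E := (0,1/2) ∪ (d, d+1/2) satisfies κ_E(x) + c ε V_E(x) = λ for all four points x ∈ ∂E = {0, 1/2, d, d+1/2} and some λ ∈ ℝ. -/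

import Mathlib

/-!
For small `δ`, the truncated integral defining `κ_E(x)` at a boundary point `x` is
`2 δ^{-s} / s - 2 ∫_{E, |x-y|>δ} |x-y|^{-1-s} dy`, and for `E = (0,1/2) ∪ (d,d+1/2)` the
`δ^{-s}` singularity of the last integral cancels the first term exactly, so `κ_E` and `V_E` are
explicit at `0` and `1/2`; the reflection `y ↦ d + 1/2 - y` preserves `E` and gives the values at
`d + 1/2` and `d`. The difference of `κ_E + cεV_E` at `1/2` and at `0` is `f(d)`.

Writing `f(d) = 2 Δ_{-1-s}(d) - cε Δ_{-α}(d)` with `Δ_e` the second difference with step `1/2`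
of `t^{e+1}/(e+1)`, the mean value theorem pins `Δ_e(d)` between `e (d ∓ 1/2)^{e-1} / 4`. Since
`((d + 1/2)/(d - 1/2))^{2+s} < 2` for `d ≥ 5`, this gives `f(d_ε) < 0 < f(4^{1/(1+s-α)} d_ε)`
as soon as `d_ε ≥ 5`, i.e. for `ε < (1+s)/(25cα)`, and the intermediate value theorem gives the
root.
-/

open MeasureTheory Set Filter Metric Topology

noncomputable section

/-- The set `E = (0,1/2) ∪ (d, d+1/2) ⊆ ℝ`. -/
def Eset (d : ℝ) : Set ℝ := Ioo 0 (1 / 2) ∪ Ioo d (d + 1 / 2)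

/-- The Riesz potential `V_E(x) = ∫_E |x-y|^{-α} dy` of a set `E ⊆ ℝ`. -/
def rieszPot1 (α : ℝ) (E : Set ℝ) (x : ℝ) : ℝ :=
  ∫ y in E, |x - y| ^ (-α)

/-- `IsFracMeanCurv1 s E x κ` says that the principal value
`κ_E(x) = p.v. ∫ (χ_{ℝ∖E}(y) - χ_E(y)) |x-y|^{-(1+s)} dy` exists and equals `κ`. -/
def IsFracMeanCurv1 (s : ℝ) (E : Set ℝ) (x κ : ℝ) : Prop :=
  Tendsto (fun δ : ℝ => ∫ y in {y : ℝ | δ < |x - y|},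
      (Eᶜ.indicator (fun _ => (1 : ℝ)) y - E.indicator (fun _ => (1 : ℝ)) y)
        * |x - y| ^ (-(1 + s)))
    (𝓝[>] (0 : ℝ)) (𝓝 κ)

/-- The function `f(d) = ζ_E(1/2) - ζ_E(0)` computed explicitly for
`E = (0,1/2) ∪ (d,d+1/2)`. -/
def fEL (s α c ε d : ℝ) : ℝ :=
  (2 / s) * (2 * d ^ (-s) - (d - 1 / 2) ^ (-s) - (d + 1 / 2) ^ (-s))
    + (c * ε / (1 - α)) *
        (2 * d ^ (1 - α) - (d - 1 / 2) ^ (1 - α) - (d + 1 / 2) ^ (1 - α))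

namespace FracMeanCurv

variable {p s α c ε d e h t x a b δ : ℝ} {E : Set ℝ}

lemma eqOn_abs_sub_of_le (hxa : x ≤ a) (hab : a ≤ b) :
    EqOn (fun y => (y - x) ^ (-p)) (fun y => |x - y| ^ (-p)) (uIcc a b) := fun y hy => by
  rw [uIcc_of_le hab] at hy
  simp only [abs_sub_comm x y, abs_of_nonneg (by linarith [hy.1] : 0 ≤ y - x)]

lemma eqOn_abs_sub_of_ge (hbx : b ≤ x) (hab : a ≤ b) :
    EqOn (fun y => (x - y) ^ (-p)) (fun y => |x - y| ^ (-p)) (uIcc a b) := fun y hy => by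
  rw [uIcc_of_le hab] at hy
  simp only [abs_of_nonneg (by linarith [hy.2] : 0 ≤ x - y)]

lemma integrableOn_abs_sub_rpow_of_le (hxa : x ≤ a) (hab : a ≤ b) (h : x < a ∨ p < 1) :
    IntegrableOn (fun y => |x - y| ^ (-p)) (Ioo a b) := by
  have hu : IntervalIntegrable (fun u : ℝ => u ^ (-p)) volume (a - x) (b - x) := by
    rcases h with h | h
    · exact intervalIntegral.intervalIntegrable_rpow
        (.inr (notMem_uIcc_of_lt (by linarith) (by linarith)))
    · exact intervalIntegral.intervalIntegrable_rpow' (by linarith)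
  have hy := hu.comp_sub_right x
  simp only [sub_add_cancel] at hy
  exact (intervalIntegrable_iff_integrableOn_Ioo_of_le hab).mp
    (hy.congr ((eqOn_abs_sub_of_le hxa hab).mono uIoc_subset_uIcc))

lemma integrableOn_abs_sub_rpow_of_ge (hbx : b ≤ x) (hab : a ≤ b) (h : b < x ∨ p < 1) :
    IntegrableOn (fun y => |x - y| ^ (-p)) (Ioo a b) := by
  have hu : IntervalIntegrable (fun u : ℝ => u ^ (-p)) volume (x - a) (x - b) := by
    rcases h with h | h
    · exact intervalIntegral.intervalIntegrable_rpow
        (.inr (notMem_uIcc_of_lt (by linarith) (by linarith)))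
    · exact intervalIntegral.intervalIntegrable_rpow' (by linarith)
  have hy := hu.comp_sub_left x
  simp only [sub_sub_cancel] at hy
  exact (intervalIntegrable_iff_integrableOn_Ioo_of_le hab).mp
    (hy.congr ((eqOn_abs_sub_of_ge hbx hab).mono uIoc_subset_uIcc))

lemma integral_abs_sub_rpow_of_le (hxa : x ≤ a) (hab : a ≤ b) (h : x < a ∨ p < 1)
    (hp : p ≠ 1) :
    ∫ y in Ioo a b, |x - y| ^ (-p) = ((b - x) ^ (1 - p) - (a - x) ^ (1 - p)) / (1 - p) := by
  rw [← integral_Ioc_eq_integral_Ioo, ← intervalIntegral.integral_of_le hab,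
    ← intervalIntegral.integral_congr (eqOn_abs_sub_of_le hxa hab),
    intervalIntegral.integral_comp_sub_right (fun u => u ^ (-p)),
    integral_rpow, neg_add_eq_sub]
  rcases h with h | h
  · exact Or.inr ⟨by contrapose! hp; linarith, notMem_uIcc_of_lt (by linarith) (by linarith)⟩
  · exact Or.inl (by linarith)

lemma integral_abs_sub_rpow_of_ge (hbx : b ≤ x) (hab : a ≤ b) (h : b < x ∨ p < 1)
    (hp : p ≠ 1) :
    ∫ y in Ioo a b, |x - y| ^ (-p) = ((x - a) ^ (1 - p) - (x - b) ^ (1 - p)) / (1 - p) := by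
  rw [← integral_Ioc_eq_integral_Ioo, ← intervalIntegral.integral_of_le hab,
    ← intervalIntegral.integral_congr (eqOn_abs_sub_of_ge hbx hab),
    intervalIntegral.integral_comp_sub_left (fun u => u ^ (-p)),
    integral_rpow, neg_add_eq_sub]
  rcases h with h | h
  · exact Or.inr ⟨by contrapose! hp; linarith, notMem_uIcc_of_lt (by linarith) (by linarith)⟩
  · exact Or.inl (by linarith)

lemma setIntegral_comp_sub_left (g : ℝ → ℝ) (a : ℝ) (S : Set ℝ) :
    ∫ y in (a - ·) ⁻¹' S, g (a - y) = ∫ y in S, g y :=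
  (Measure.measurePreserving_sub_left volume a).setIntegral_preimage_emb
    (Homeomorph.subLeft a).measurableEmbedding g S

lemma integral_abs_rpow_neg_setOf_lt_abs (hp : 1 < p) (hδ : 0 < δ) :
    ∫ u in {u : ℝ | δ < |u|}, |u| ^ (-p) = 2 * δ ^ (1 - p) / (p - 1) := by
  have hind : ∀ u : ℝ, {u : ℝ | δ < |u|}.indicator (fun u => |u| ^ (-p)) u
      = (Ioi δ).indicator (fun t => t ^ (-p)) |u| := fun u =>
    indicator_comp_right (g := fun t : ℝ => t ^ (-p)) abs (s := Ioi δ) (x := u)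
  rw [← integral_indicator (measurableSet_lt measurable_const measurable_abs), funext hind,
    integral_comp_abs, setIntegral_indicator measurableSet_Ioi,
    Ioi_inter_Ioi, max_eq_right hδ.le, integral_Ioi_rpow_of_lt (by linarith) hδ]
  rw [neg_add_eq_sub, neg_div, ← div_neg, neg_sub, mul_div_assoc]

lemma integral_abs_sub_rpow_of_lt_abs (hp : 1 < p) (hδ : 0 < δ) :
    ∫ y in {y : ℝ | δ < |x - y|}, |x - y| ^ (-p) = 2 * δ ^ (1 - p) / (p - 1) :=
  (setIntegral_comp_sub_left (fun u => |u| ^ (-p)) x _).trans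
    (integral_abs_rpow_neg_setOf_lt_abs hp hδ)

lemma integrableOn_abs_sub_rpow_of_lt_abs (hp : 1 < p) (hδ : 0 < δ) :
    IntegrableOn (fun y => |x - y| ^ (-p)) {y : ℝ | δ < |x - y|} :=
  .of_integral_ne_zero <| by
    rw [integral_abs_sub_rpow_of_lt_abs hp hδ]
    exact (div_pos (by positivity) (by linarith)).ne'

lemma truncatedCurvIntegral_eq (hE : MeasurableSet E) (hs : 0 < s) (hδ : 0 < δ) :
    ∫ y in {y : ℝ | δ < |x - y|},
        (Eᶜ.indicator (fun _ => (1 : ℝ)) y - E.indicator (fun _ => (1 : ℝ)) y)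
          * |x - y| ^ (-(1 + s))
      = 2 * δ ^ (-s) / s - 2 * ∫ y in {y : ℝ | δ < |x - y|} ∩ E, |x - y| ^ (-(1 + s)) := by
  have hp : (1 : ℝ) < 1 + s := by linarith
  have hw := integrableOn_abs_sub_rpow_of_lt_abs (x := x) hp hδ
  have hpt : ∀ y, (Eᶜ.indicator (fun _ => (1 : ℝ)) y - E.indicator (fun _ => (1 : ℝ)) y)
      * |x - y| ^ (-(1 + s))
      = |x - y| ^ (-(1 + s)) - 2 * E.indicator (fun y => |x - y| ^ (-(1 + s))) y := by
    intro y
    by_cases hy : y ∈ E <;> simp [hy]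
    ring
  simp_rw [hpt]
  rw [integral_sub hw ((hw.indicator hE).const_mul 2), integral_const_mul,
    setIntegral_indicator hE, integral_abs_sub_rpow_of_lt_abs hp hδ]
  ring_nf

lemma isFracMeanCurv1_of_integral_eq (hE : MeasurableSet E) (hs : 0 < s) {r A : ℝ} (hr : 0 < r)
    (h : ∀ δ ∈ Ioo 0 r,
      ∫ y in {y : ℝ | δ < |x - y|} ∩ E, |x - y| ^ (-(1 + s)) = (δ ^ (-s) - A) / s) :
    IsFracMeanCurv1 s E x (2 * A / s) := by
  refine tendsto_const_nhds.congr' ?_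
  filter_upwards [Ioo_mem_nhdsGT hr] with δ hδ
  rw [truncatedCurvIntegral_eq hE hs hδ.1, h δ hδ]
  ring

lemma abs_sub_sub_left (a x y : ℝ) : |x - (a - y)| = |a - x - y| := by
  rw [← abs_neg]; ring_nf

lemma isFracMeanCurv1_comp_sub_left {κ : ℝ} (a : ℝ) (h : IsFracMeanCurv1 s E x κ) :
    IsFracMeanCurv1 s ((a - ·) ⁻¹' E) (a - x) κ := by
  refine h.congr fun δ => ?_
  have hS : (a - ·) ⁻¹' {z | δ < |x - z|} = {y | δ < |a - x - y|} := by
    ext y; simp only [mem_preimage, mem_ofPred_eq, abs_sub_sub_left]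
  rw [← setIntegral_comp_sub_left _ a, hS]
  congr 1 with y
  by_cases hy : a - y ∈ E <;> simp [hy, abs_sub_sub_left]

lemma rieszPot1_comp_sub_left (α a x : ℝ) (E : Set ℝ) :
    rieszPot1 α ((a - ·) ⁻¹' E) (a - x) = rieszPot1 α E x := by
  rw [rieszPot1, rieszPot1, ← setIntegral_comp_sub_left (fun y => |x - y| ^ (-α)) a E]
  simp only [abs_sub_sub_left]

lemma setOf_lt_abs_sub_inter_Ioo_of_le (hxa : x ≤ a) :
    {y : ℝ | δ < |x - y|} ∩ Ioo a b = Ioo (max a (x + δ)) b := by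
  ext y; simp only [mem_inter_iff, mem_ofPred_eq, mem_Ioo, lt_abs, max_lt_iff]; grind

lemma setOf_lt_abs_sub_inter_Ioo_of_ge (hbx : b ≤ x) :
    {y : ℝ | δ < |x - y|} ∩ Ioo a b = Ioo a (min b (x - δ)) := by
  ext y; simp only [mem_inter_iff, mem_ofPred_eq, mem_Ioo, lt_abs, lt_min_iff]; grind

lemma setIntegral_Ioo_union_Ioo {f : ℝ → ℝ} (hbc : b ≤ c)
    (h₁ : IntegrableOn f (Ioo a b)) (h₂ : IntegrableOn f (Ioo c e)) :
    ∫ y in Ioo a b ∪ Ioo c e, f y = (∫ y in Ioo a b, f y) + ∫ y in Ioo c e, f y :=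
  setIntegral_union (disjoint_left.mpr fun _ h h' => by linarith [h.2, h'.1]) measurableSet_Ioo
    h₁ h₂

lemma measurableSet_Eset (d : ℝ) : MeasurableSet (Eset d) :=
  measurableSet_Ioo.union measurableSet_Ioo

lemma preimage_sub_left_Eset (d : ℝ) : (d + 1 / 2 - ·) ⁻¹' Eset d = Eset d := by
  ext y; simp only [Eset, mem_preimage, mem_union, mem_Ioo]; grind

lemma isFracMeanCurv1_Eset_zero (hs : 0 < s) (hd : 1 / 2 < d) :
    IsFracMeanCurv1 s (Eset d) 0
      (2 * ((1 / 2) ^ (-s) + (d + 1 / 2) ^ (-s) - d ^ (-s)) / s) := by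
  refine isFracMeanCurv1_of_integral_eq (measurableSet_Eset d) hs (r := 1 / 2) (by norm_num)
    ?_
  rintro δ ⟨hδ, hδ'⟩
  have hp : 1 + s ≠ 1 := by linarith
  rw [Eset, inter_union_distrib_left, setOf_lt_abs_sub_inter_Ioo_of_le le_rfl,
    setOf_lt_abs_sub_inter_Ioo_of_le (by linarith), zero_add, max_eq_right hδ.le,
    max_eq_left (by linarith),
    setIntegral_Ioo_union_Ioo (by linarith)
      (integrableOn_abs_sub_rpow_of_le hδ.le hδ'.le (.inl hδ))
      (integrableOn_abs_sub_rpow_of_le (by linarith) (by linarith) (.inl (by linarith))),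
    integral_abs_sub_rpow_of_le hδ.le hδ'.le (.inl hδ) hp,
    integral_abs_sub_rpow_of_le (by linarith) (by linarith) (.inl (by linarith)) hp]
  simp only [sub_zero, show 1 - (1 + s) = -s by ring, div_neg]
  field_simp
  ring

lemma isFracMeanCurv1_Eset_half (hs : 0 < s) (hd : 1 / 2 < d) :
    IsFracMeanCurv1 s (Eset d) (1 / 2)
      (2 * ((1 / 2) ^ (-s) + d ^ (-s) - (d - 1 / 2) ^ (-s)) / s) := by
  refine isFracMeanCurv1_of_integral_eq (measurableSet_Eset d) hs
    (lt_min (by norm_num : (0 : ℝ) < 1 / 2) (sub_pos.mpr hd)) ?_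
  rintro δ ⟨hδ, hδ'⟩
  have hδ₁ : δ < 1 / 2 := hδ'.trans_le (min_le_left _ _)
  have hδ₂ : δ < d - 1 / 2 := hδ'.trans_le (min_le_right _ _)
  have hp : 1 + s ≠ 1 := by linarith
  rw [Eset, inter_union_distrib_left, setOf_lt_abs_sub_inter_Ioo_of_ge le_rfl,
    setOf_lt_abs_sub_inter_Ioo_of_le hd.le, min_eq_right (by linarith),
    max_eq_left (by linarith),
    setIntegral_Ioo_union_Ioo (by linarith)
      (integrableOn_abs_sub_rpow_of_ge (by linarith) (by linarith) (.inl (by linarith)))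
      (integrableOn_abs_sub_rpow_of_le hd.le (by linarith) (.inl hd)),
    integral_abs_sub_rpow_of_ge (by linarith) (by linarith) (.inl (by linarith)) hp,
    integral_abs_sub_rpow_of_le hd.le (by linarith) (.inl hd) hp]
  simp only [sub_zero, sub_sub_cancel, add_sub_cancel_right, show 1 - (1 + s) = -s by ring,
    div_neg]
  field_simp
  ring

lemma rieszPot1_Eset_zero (hα : α < 1) (hd : 1 / 2 < d) :
    rieszPot1 α (Eset d) 0
      = ((1 / 2) ^ (1 - α) + (d + 1 / 2) ^ (1 - α) - d ^ (1 - α)) / (1 - α) := by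
  have hp : α ≠ 1 := hα.ne
  rw [rieszPot1, Eset,
    setIntegral_Ioo_union_Ioo (by linarith)
      (integrableOn_abs_sub_rpow_of_le le_rfl (by norm_num) (.inr hα))
      (integrableOn_abs_sub_rpow_of_le (by linarith) (by linarith) (.inr hα)),
    integral_abs_sub_rpow_of_le le_rfl (by norm_num) (.inr hα) hp,
    integral_abs_sub_rpow_of_le (by linarith) (by linarith) (.inr hα) hp]
  simp only [sub_zero, Real.zero_rpow (sub_ne_zero.mpr hp.symm)]
  ring

lemma rieszPot1_Eset_half (hα : α < 1) (hd : 1 / 2 < d) :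
    rieszPot1 α (Eset d) (1 / 2)
      = ((1 / 2) ^ (1 - α) + d ^ (1 - α) - (d - 1 / 2) ^ (1 - α)) / (1 - α) := by
  have hp : α ≠ 1 := hα.ne
  rw [rieszPot1, Eset,
    setIntegral_Ioo_union_Ioo (by linarith)
      (integrableOn_abs_sub_rpow_of_ge le_rfl (by norm_num) (.inr hα))
      (integrableOn_abs_sub_rpow_of_le hd.le (by linarith) (.inr hα)),
    integral_abs_sub_rpow_of_ge le_rfl (by norm_num) (.inr hα) hp,
    integral_abs_sub_rpow_of_le hd.le (by linarith) (.inr hα) hp,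
    sub_zero, sub_self, add_sub_cancel_right, Real.zero_rpow (sub_ne_zero.mpr hp.symm)]
  ring

def rpowSecondDiff (e h d : ℝ) : ℝ :=
  ((d - h) ^ (e + 1) + (d + h) ^ (e + 1) - 2 * d ^ (e + 1)) / (e + 1)

lemma rpow_add_sub_rpow_mem_Icc (he : e < 0) (ha : 0 < a) (hh : 0 < h) :
    (a + h) ^ e - a ^ e ∈ Icc (h * (e * a ^ (e - 1))) (h * (e * (a + h) ^ (e - 1))) := by
  obtain ⟨ξ, hξ, hslope⟩ := exists_hasDerivAt_eq_slope (fun t : ℝ => t ^ e)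
    (fun t => e * t ^ (e - 1)) (lt_add_of_pos_right a hh)
    (fun t ht => (Real.continuousAt_rpow_const _ _ (.inl (by linarith [ht.1]))).continuousWithinAt)
    (fun t ht => Real.hasDerivAt_rpow_const (.inl (by linarith [ht.1])))
  have hincr : (a + h) ^ e - a ^ e = h * (e * ξ ^ (e - 1)) := by
    rw [hslope, add_sub_cancel_left]; field_simp
  rw [hincr]
  exact ⟨mul_le_mul_of_nonneg_left (mul_le_mul_of_nonpos_left
      (Real.rpow_le_rpow_of_nonpos ha hξ.1.le (by linarith)) he.le) hh.le,
    mul_le_mul_of_nonneg_left (mul_le_mul_of_nonpos_left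
      (Real.rpow_le_rpow_of_nonpos (by linarith [hξ.1]) hξ.2.le (by linarith)) he.le) hh.le⟩

lemma rpowSecondDiff_mem_Icc (he : e < 0) (he' : e ≠ -1) (hh : 0 < h) (hd : h < d) :
    rpowSecondDiff e h d
      ∈ Icc (h ^ 2 * (e * (d - h) ^ (e - 1))) (h ^ 2 * (e * (d + h) ^ (e - 1))) := by
  have he1 : e + 1 ≠ 0 := by contrapose! he'; linarith
  -- `G d - G (d - h)` is the second difference and `G'` a first difference of `t ↦ t ^ e`,
  -- so the mean value theorem applies twice.
  set G : ℝ → ℝ := fun v => ((v + h) ^ (e + 1) - v ^ (e + 1)) / (e + 1)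
  have hG : ∀ v, 0 < v → HasDerivAt G ((v + h) ^ e - v ^ e) v := fun v hv => by
    have h₁ := (Real.hasDerivAt_rpow_const (p := e + 1) (.inl (by linarith : v + h ≠ 0))).comp v
      ((hasDerivAt_id v).add_const h)
    have h₂ := Real.hasDerivAt_rpow_const (p := e + 1) (.inl hv.ne')
    have h₃ := (h₁.sub h₂).div_const (e + 1)
    rwa [add_sub_cancel_right, mul_one, ← mul_sub, mul_div_cancel_left₀ _ he1] at h₃
  obtain ⟨ξ, hξ, hslope⟩ := exists_hasDerivAt_eq_slope G (fun v => (v + h) ^ e - v ^ e)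
    (sub_lt_self d hh) (fun v hv => (hG v (by linarith [hv.1])).continuousAt.continuousWithinAt)
    (fun v hv => hG v (by linarith [hv.1]))
  have hsecond : rpowSecondDiff e h d = h * ((ξ + h) ^ e - ξ ^ e) := by
    rw [hslope, sub_sub_cancel, rpowSecondDiff]
    simp only [G, sub_add_cancel]
    field_simp
    ring
  obtain ⟨hlo, hhi⟩ := rpow_add_sub_rpow_mem_Icc he (by linarith [hξ.1] : 0 < ξ) hh
  have hl : e * (d - h) ^ (e - 1) ≤ e * ξ ^ (e - 1) := mul_le_mul_of_nonpos_left
    (Real.rpow_le_rpow_of_nonpos (by linarith) hξ.1.le (by linarith)) he.le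
  have hu : e * (ξ + h) ^ (e - 1) ≤ e * (d + h) ^ (e - 1) := mul_le_mul_of_nonpos_left
    (Real.rpow_le_rpow_of_nonpos (by linarith [hξ.1]) (by linarith [hξ.2]) (by linarith)) he.le
  rw [hsecond, sq, mul_assoc, mul_assoc]
  exact ⟨mul_le_mul_of_nonneg_left ((mul_le_mul_of_nonneg_left hl hh.le).trans hlo) hh.le,
    mul_le_mul_of_nonneg_left (hhi.trans (mul_le_mul_of_nonneg_left hu hh.le)) hh.le⟩

lemma fEL_eq_rpowSecondDiff (s α c ε d : ℝ) :
    fEL s α c ε d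
      = 2 * rpowSecondDiff (-1 - s) (1 / 2) d - c * ε * rpowSecondDiff (-α) (1 / 2) d := by
  rw [fEL, rpowSecondDiff, rpowSecondDiff, show -1 - s + 1 = -s by ring,
    show -α + 1 = 1 - α by ring]
  ring

lemma rpow_neg_sub_half_lt_two_mul (hd : 5 ≤ d) (ht₀ : 0 ≤ t) (ht : t ≤ 3) :
    (d - 1 / 2) ^ (-t) < 2 * (d + 1 / 2) ^ (-t) := by
  have hratio : (d + 1 / 2) / (d - 1 / 2) ≤ 11 / 9 := by
    rw [div_le_iff₀ (by linarith)]; linarith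
  have hpow : ((d + 1 / 2) / (d - 1 / 2)) ^ t < 2 :=
    calc ((d + 1 / 2) / (d - 1 / 2)) ^ t ≤ (11 / 9) ^ t :=
          Real.rpow_le_rpow (div_nonneg (by linarith) (by linarith)) hratio ht₀
      _ ≤ (11 / 9) ^ (3 : ℝ) := Real.rpow_le_rpow_of_exponent_le (by norm_num) ht
      _ < 2 := by norm_num
  have hsplit : (d - 1 / 2) ^ (-t) = ((d + 1 / 2) / (d - 1 / 2)) ^ t * (d + 1 / 2) ^ (-t) := by
    rw [Real.div_rpow (by linarith) (by linarith), Real.rpow_neg (by linarith),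
      Real.rpow_neg (by linarith)]
    field_simp
  rw [hsplit]
  exact mul_lt_mul_of_pos_right hpow (by positivity)

lemma rpow_neg_sub_one_eq_mul (hx : 0 < x) (s α : ℝ) :
    x ^ (-α - 1) = x ^ (1 + s - α) * x ^ (-(2 + s)) := by
  rw [← Real.rpow_add hx]; ring_nf

lemma fEL_neg_of_le (hs : 0 < s) (hs₁ : s < 1) (hα : 0 < α) (hα₁ : α < 1) (hc : 0 < c)
    (hε : 0 < ε) (hd : 5 ≤ d) (hK : c * α * ε * d ^ (1 + s - α) ≤ 1 + s) :
    fEL s α c ε d < 0 := by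
  have hX := (rpowSecondDiff_mem_Icc (e := -1 - s) (by linarith) (by linarith) (by norm_num)
    (by linarith : (1 : ℝ) / 2 < d)).2
  have hY := (rpowSecondDiff_mem_Icc (e := -α) (by linarith) (by linarith) (by norm_num)
    (by linarith : (1 : ℝ) / 2 < d)).1
  rw [show -1 - s - 1 = -(2 + s) by ring] at hX
  have hu : 0 < d - 1 / 2 := by linarith
  have hq : 0 ≤ 1 + s - α := by linarith
  have key : c * α * ε * (d - 1 / 2) ^ (-α - 1) < 2 * (1 + s) * (d + 1 / 2) ^ (-(2 + s)) :=
    calc c * α * ε * (d - 1 / 2) ^ (-α - 1)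
        = c * α * ε * (d - 1 / 2) ^ (1 + s - α) * (d - 1 / 2) ^ (-(2 + s)) := by
          rw [rpow_neg_sub_one_eq_mul (by linarith) s α]; ring
      _ ≤ c * α * ε * d ^ (1 + s - α) * (d - 1 / 2) ^ (-(2 + s)) := by
          gcongr; linarith
      _ ≤ (1 + s) * (d - 1 / 2) ^ (-(2 + s)) := by gcongr
      _ < (1 + s) * (2 * (d + 1 / 2) ^ (-(2 + s))) := by
          gcongr
          exact rpow_neg_sub_half_lt_two_mul hd (by linarith) (by linarith)
      _ = 2 * (1 + s) * (d + 1 / 2) ^ (-(2 + s)) := by ring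
  have hcY := mul_le_mul_of_nonneg_left hY (by positivity : 0 ≤ c * ε)
  rw [fEL_eq_rpowSecondDiff]
  linarith

lemma fEL_pos_of_le (hs : 0 < s) (hs₁ : s < 1) (hα : 0 < α) (hα₁ : α < 1) (hc : 0 < c)
    (hε : 0 < ε) (hd : 5 ≤ d) (hK : 4 * (1 + s) ≤ c * α * ε * d ^ (1 + s - α)) :
    0 < fEL s α c ε d := by
  have hX := (rpowSecondDiff_mem_Icc (e := -1 - s) (by linarith) (by linarith) (by norm_num)
    (by linarith : (1 : ℝ) / 2 < d)).1
  have hY := (rpowSecondDiff_mem_Icc (e := -α) (by linarith) (by linarith) (by norm_num)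
    (by linarith : (1 : ℝ) / 2 < d)).2
  rw [show -1 - s - 1 = -(2 + s) by ring] at hX
  have hu : 0 < d - 1 / 2 := by linarith
  have hq : 0 ≤ 1 + s - α := by linarith
  have key : 2 * (1 + s) * (d - 1 / 2) ^ (-(2 + s)) < c * α * ε * (d + 1 / 2) ^ (-α - 1) :=
    calc 2 * (1 + s) * (d - 1 / 2) ^ (-(2 + s))
        < 2 * (1 + s) * (2 * (d + 1 / 2) ^ (-(2 + s))) := by
          gcongr
          exact rpow_neg_sub_half_lt_two_mul hd (by linarith) (by linarith)
      _ = 4 * (1 + s) * (d + 1 / 2) ^ (-(2 + s)) := by ring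
      _ ≤ c * α * ε * d ^ (1 + s - α) * (d + 1 / 2) ^ (-(2 + s)) := by gcongr
      _ ≤ c * α * ε * (d + 1 / 2) ^ (1 + s - α) * (d + 1 / 2) ^ (-(2 + s)) := by
          gcongr; linarith
      _ = c * α * ε * (d + 1 / 2) ^ (-α - 1) := by
          rw [rpow_neg_sub_one_eq_mul (by linarith) s α]; ring
  have hcY := mul_le_mul_of_nonneg_left hY (by positivity : 0 ≤ c * ε)
  rw [fEL_eq_rpowSecondDiff]
  linarith

lemma continuousOn_fEL (s α c ε : ℝ) : ContinuousOn (fEL s α c ε) (Ioi (1 / 2)) := by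
  refine continuousOn_of_forall_continuousAt fun x (hx : 1 / 2 < x) => ?_
  have h₀ : x ≠ 0 := by positivity
  have h₁ : x - 1 / 2 ≠ 0 := sub_ne_zero.mpr hx.ne'
  have h₂ : x + 1 / 2 ≠ 0 := by positivity
  unfold fEL
  fun_prop (disch := first | exact .inl h₀ | exact .inl h₁ | exact .inl h₂)

lemma exists_fEL_eq_zero (hs : 0 < s) (hs₁ : s < 1) (hα : 0 < α) (hα₁ : α < 1) (hc : 0 < c)
    (hε : 0 < ε) (hsmall : 25 * (c * α * ε) < 1 + s) :
    ∃ d, ((1 + s) / (c * α * ε)) ^ (1 / (1 + s - α)) < d ∧ 1 / 2 < d ∧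
      fEL s α c ε d = 0 := by
  have hq : 0 < 1 + s - α := by linarith
  have hK : 0 < c * α * ε := by positivity
  have hroot : ∀ y, 0 ≤ y →
      c * α * ε * (y ^ (1 / (1 + s - α))) ^ (1 + s - α) = c * α * ε * y :=
    fun y hy => by rw [one_div, Real.rpow_inv_rpow hy hq.ne']
  set d₀ := ((1 + s) / (c * α * ε)) ^ (1 / (1 + s - α)) with hd₀_def
  set d₁ := (4 * (1 + s) / (c * α * ε)) ^ (1 / (1 + s - α))
  have hd₀ : 5 ≤ d₀ := by
    rw [hd₀_def, one_div, Real.le_rpow_inv_iff_of_pos (by norm_num) (by positivity) hq]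
    calc (5 : ℝ) ^ (1 + s - α) ≤ 5 ^ (2 : ℝ) :=
          Real.rpow_le_rpow_of_exponent_le (by norm_num) (by linarith)
      _ = 25 := by norm_num
      _ ≤ (1 + s) / (c * α * ε) := by rw [le_div_iff₀ hK]; linarith
  have hd₀₁ : d₀ < d₁ :=
    Real.rpow_lt_rpow (by positivity) (div_lt_div_of_pos_right (by linarith) hK)
      (by positivity)
  obtain ⟨d, hd, hfd⟩ := intermediate_value_Ioo hd₀₁.le
    ((continuousOn_fEL s α c ε).mono fun y hy => show 1 / 2 < y by linarith [hy.1])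
    ⟨fEL_neg_of_le hs hs₁ hα hα₁ hc hε hd₀
        (by rw [hroot _ (by positivity), mul_div_cancel₀ _ hK.ne']),
      fEL_pos_of_le hs hs₁ hα hα₁ hc hε (hd₀.trans hd₀₁.le)
        (by rw [hroot _ (by positivity), mul_div_cancel₀ _ hK.ne'])⟩
  exact ⟨d, hd.1, by linarith [hd.1], hfd⟩

lemma exists_isFracMeanCurv1_add_rieszPot1_eq (hs : 0 < s) (hα : α < 1) (hd : 1 / 2 < d)
    (hf : fEL s α c ε d = 0) :
    ∃ lam : ℝ, ∀ x ∈ ({0, 1 / 2, d, d + 1 / 2} : Set ℝ), ∃ κ : ℝ,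
      IsFracMeanCurv1 s (Eset d) x κ ∧ κ + c * ε * rieszPot1 α (Eset d) x = lam := by
  set κ₀ := 2 * ((1 / 2) ^ (-s) + (d + 1 / 2) ^ (-s) - d ^ (-s)) / s with hκ₀_def
  set κ₁ := 2 * ((1 / 2) ^ (-s) + d ^ (-s) - (d - 1 / 2) ^ (-s)) / s with hκ₁_def
  have hκ₀ : IsFracMeanCurv1 s (Eset d) 0 κ₀ := isFracMeanCurv1_Eset_zero hs hd
  have hκ₁ : IsFracMeanCurv1 s (Eset d) (1 / 2) κ₁ := isFracMeanCurv1_Eset_half hs hd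
  have hreflect : ∀ {x κ : ℝ}, IsFracMeanCurv1 s (Eset d) x κ →
      IsFracMeanCurv1 s (Eset d) (d + 1 / 2 - x) κ ∧
        rieszPot1 α (Eset d) (d + 1 / 2 - x) = rieszPot1 α (Eset d) x := by
    intro x κ h
    have h' := isFracMeanCurv1_comp_sub_left (d + 1 / 2) h
    have hV := rieszPot1_comp_sub_left α (d + 1 / 2) x (Eset d)
    rw [preimage_sub_left_Eset] at h' hV
    exact ⟨h', hV⟩
  have hbalance : κ₁ + c * ε * rieszPot1 α (Eset d) (1 / 2)
      = κ₀ + c * ε * rieszPot1 α (Eset d) 0 := by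
    rw [rieszPot1_Eset_half hα hd, rieszPot1_Eset_zero hα hd, hκ₀_def, hκ₁_def]
    rw [fEL] at hf
    linear_combination hf
  refine ⟨κ₀ + c * ε * rieszPot1 α (Eset d) 0, fun x hx => ?_⟩
  rcases hx with rfl | rfl | rfl | rfl
  · exact ⟨_, hκ₀, rfl⟩
  · exact ⟨_, hκ₁, hbalance⟩
  · obtain ⟨h, hV⟩ := hreflect hκ₁
    rw [add_sub_cancel_right] at h hV
    exact ⟨_, h, hV ▸ hbalance⟩
  · obtain ⟨h, hV⟩ := hreflect hκ₀
    rw [sub_zero] at h hV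
    exact ⟨_, h, hV ▸ rfl⟩

end FracMeanCurv

/-- With `d_ε = ((1+s)/(cαε))^{1/(1+s-α)}`, for all sufficiently small
`ε > 0` there exists `d > d_ε` with `f(d) = 0`; consequently `E = (0,1/2) ∪ (d,d+1/2)`
satisfies `κ_E + cεV_E = λ` at all four boundary points, for some `λ ∈ ℝ`. -/
theorem stmt16 (s α c : ℝ) (hs : s ∈ Ioo (0 : ℝ) 1) (hα : α ∈ Ioo (0 : ℝ) 1) (hc : 0 < c) :
    ∃ εbar : ℝ, 0 < εbar ∧ ∀ ε ∈ Ioo (0 : ℝ) εbar,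
      ∃ d : ℝ, ((1 + s) / (c * α * ε)) ^ (1 / (1 + s - α)) < d ∧
        fEL s α c ε d = 0 ∧
        ∃ lam : ℝ, ∀ x ∈ ({0, 1 / 2, d, d + 1 / 2} : Set ℝ), ∃ κ : ℝ,
          IsFracMeanCurv1 s (Eset d) x κ ∧
          κ + c * ε * rieszPot1 α (Eset d) x = lam := by
  obtain ⟨hs₀, hs₁⟩ := hs
  obtain ⟨hα₀, hα₁⟩ := hα
  refine ⟨(1 + s) / (25 * (c * α)), by positivity, fun ε ⟨hε, hεbar⟩ => ?_⟩
  have hsmall : 25 * (c * α * ε) < 1 + s := by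
    rw [lt_div_iff₀ (by positivity)] at hεbar
    linarith
  obtain ⟨d, hdε, hd, hf⟩ :=
    FracMeanCurv.exists_fEL_eq_zero hs₀ hs₁ hα₀ hα₁ hc hε hsmall
  exact ⟨d, hdε, hf, FracMeanCurv.exists_isFracMeanCurv1_add_rieszPot1_eq hs₀ hα₁ hd hf⟩
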